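/- arXiv:2208.07916 — 4 statements merged into one kernel-verified Lean document; each statement's English description precedes it below -/
import Mathlib

section
/- Let E be a free abelian group of finite rank with a symmetric bilinear form, κ ∈ E ⊗ ℝ non-resonant (⟨κ,a⟩ ≠ 0 for all nonzero a ∈ E), and suppose there exist nonzero δ₁, δ₂ ∈ E that are linearly independent, both isotropic, and mutually orthogonal. Then for every λ > 0 the set Δ = { δ ∈ E : ⟨δ,δ⟩ = 0 and 0 < ⟨κ,δ⟩ ≤ λ } is infinite. -/
/-!
The values `⟨κ, m δ₁ + n δ₂⟩ = m ⟨κ, δ₁⟩ + n ⟨κ, δ₂⟩` are pairwise distinct by non-resonance and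
linear independence, so `⟨κ, δ₁⟩` and `⟨κ, δ₂⟩` generate a non-cyclic, hence dense, subgroup of `ℝ`.
It meets `(0, λ)` in infinitely many points, and each of them is `⟨κ, δ⟩` for an isotropic
`δ = m δ₁ + n δ₂ ∈ E`, because `δ₁` and `δ₂` span a totally isotropic plane.
-/

open Set

theorem Dense.infinite_inter_of_isOpen {X : Type*} [TopologicalSpace X] [T1Space X]
    {s U : Set X} (hs : Dense s) (hU : IsOpen U) (hUinf : U.Infinite) : (U ∩ s).Infinite :=
  fun hfin => hUinf <| hfin.subset <| by
    simpa only [hfin.isClosed.closure_eq] using hs.open_subset_closure_inter hU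

theorem dense_addSubgroupClosure_pair_of_zsmul_add_zsmul_eq_zero {G : Type*} [AddCommGroup G]
    [LinearOrder G] [IsOrderedAddMonoid G] [TopologicalSpace G] [OrderTopology G] [Archimedean G]
    {a b : G} (hind : ∀ m n : ℤ, m • a + n • b = 0 → m = 0 ∧ n = 0) :
    Dense (AddSubgroup.closure {a, b} : Set G) := by
  refine (AddSubgroup.dense_or_cyclic _).resolve_right ?_
  rintro ⟨c, hc⟩
  have hab : a ∈ AddSubgroup.closure {c} ∧ b ∈ AddSubgroup.closure {c} := by
    simpa only [← hc] using
      ⟨AddSubgroup.subset_closure (by simp), AddSubgroup.subset_closure (by simp)⟩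
  obtain ⟨⟨m, rfl⟩, ⟨n, rfl⟩⟩ := hab.imp AddSubgroup.mem_closure_singleton.1
    AddSubgroup.mem_closure_singleton.1
  obtain ⟨rfl, hm⟩ := hind n (-m) (by rw [smul_smul, smul_smul, ← add_smul]; simp [mul_comm])
  obtain rfl : m = 0 := neg_eq_zero.1 hm
  simpa using hind 1 0

theorem LinearMap.BilinForm.apply_zsmul_add_zsmul_self_eq_zero {R M : Type*} [CommRing R]
    [AddCommGroup M] [Module R M] {B : LinearMap.BilinForm R M} (hB : B.IsSymm) {x y : M}
    (hx : B x x = 0) (hy : B y y = 0) (hxy : B x y = 0) (m n : ℤ) :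
    B (m • x + n • y) (m • x + n • y) = 0 := by
  have hyx : B y x = 0 := by rw [← hB.eq, hxy]
  simp [hx, hy, hxy, hyx]

theorem stmt_3_general (V : Type*) [AddCommGroup V] [Module ℝ V]
    (B : LinearMap.BilinForm ℝ V) (hsymm : B.IsSymm)
    (E : Submodule ℤ V)
    (κ : V) (hres : ∀ a ∈ E, a ≠ 0 → B κ a ≠ 0)
    (δ₁ δ₂ : V) (h1E : δ₁ ∈ E) (h2E : δ₂ ∈ E)
    (hind : ∀ m n : ℤ, m • δ₁ + n • δ₂ = 0 → m = 0 ∧ n = 0)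
    (hiso1 : B δ₁ δ₁ = 0) (hiso2 : B δ₂ δ₂ = 0) (horth : B δ₁ δ₂ = 0)
    (lam : ℝ) (hlam : 0 < lam) :
    {δ : V | δ ∈ E ∧ B δ δ = 0 ∧ 0 < B κ δ ∧ B κ δ ≤ lam}.Infinite := by
  have hmem (m n : ℤ) : m • δ₁ + n • δ₂ ∈ E := add_mem (zsmul_mem h1E m) (zsmul_mem h2E n)
  have hval (m n : ℤ) : B κ (m • δ₁ + n • δ₂) = m • B κ δ₁ + n • B κ δ₂ := by simp
  have hdense : Dense (AddSubgroup.closure {B κ δ₁, B κ δ₂} : Set ℝ) :=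
    dense_addSubgroupClosure_pair_of_zsmul_add_zsmul_eq_zero fun m n h =>
      hind m n (by_contra fun hne => hres _ (hmem m n) hne (by rw [hval, h]))
  refine Infinite.of_image (B κ) <|
    (hdense.infinite_inter_of_isOpen isOpen_Ioo (Ioo_infinite hlam)).mono ?_
  rintro _ ⟨hx, hxS⟩
  obtain ⟨m, n, rfl⟩ := AddSubgroup.mem_closure_pair.1 hxS
  rw [← hval] at hx ⊢
  exact mem_image_of_mem _ ⟨hmem m n,
    B.apply_zsmul_add_zsmul_self_eq_zero hsymm hiso1 hiso2 horth m n, hx.1, hx.2.le⟩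

/-- for a lattice `E` (finitely generated ℤ-submodule of `V = E ⊗ ℝ`) with
an integer-valued symmetric bilinear form, a non-resonant `κ`, and two nonzero,
linearly independent, isotropic, mutually orthogonal classes `δ₁, δ₂ ∈ E`, the set
`Δ = {δ ∈ E : ⟨δ,δ⟩ = 0, 0 < ⟨κ,δ⟩ ≤ λ}` is infinite for every `λ > 0`. -/
theorem stmt_3 (V : Type*) [AddCommGroup V] [Module ℝ V] [FiniteDimensional ℝ V]
    (B : LinearMap.BilinForm ℝ V) (hsymm : B.IsSymm)
    (E : Submodule ℤ V) (hfg : E.FG)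
    (hint : ∀ x ∈ E, ∀ y ∈ E, ∃ n : ℤ, B x y = n)
    (κ : V) (hres : ∀ a ∈ E, a ≠ 0 → B κ a ≠ 0)
    (δ₁ δ₂ : V) (h1E : δ₁ ∈ E) (h2E : δ₂ ∈ E) (h1 : δ₁ ≠ 0) (h2 : δ₂ ≠ 0)
    (hind : ∀ m n : ℤ, m • δ₁ + n • δ₂ = 0 → m = 0 ∧ n = 0)
    (hiso1 : B δ₁ δ₁ = 0) (hiso2 : B δ₂ δ₂ = 0) (horth : B δ₁ δ₂ = 0)
    (lam : ℝ) (hlam : 0 < lam) :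
    {δ : V | δ ∈ E ∧ B δ δ = 0 ∧ 0 < B κ δ ∧ B κ δ ≤ lam}.Infinite :=
  stmt_3_general V B hsymm E κ hres δ₁ δ₂ h1E h2E hind hiso1 hiso2 horth lam hlam
end

section
/- Let δ be an integral alternating bilinear form on L ≅ ℤ⁴ that is primitive (indivisible as an element of Λ²(L*)) and satisfies δ ∧ δ = 0 (equivalently, its Pfaffian vanishes). Then δ is decomposable: there exist α, β ∈ L* = Hom(L, ℤ) with δ = α ∧ β. -/
/-!
Write `p i j = δ (e i) (e j)` and split it into `a = (p₀₁, p₀₂, p₀₃)` and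
`d = (p₂₃, -p₁₃, p₁₂)` in `ℤ³`; the Pfaffian is `a ⬝ᵥ d`, and we want `u = (u₀, x)`,
`w = (w₀, y)` with `u₀ y - w₀ x = a` and `x ⨯₃ y = d`. Everything rests on the identity
`a ⨯₃ (d ⨯₃ z) = (a ⬝ᵥ z) d - (a ⬝ᵥ d) z`: writing `a = g a₁` with `a₁ ⬝ᵥ z = 1`
(Bézout), the vanishing Pfaffian gives `a₁ ⨯₃ (d ⨯₃ z) = d`, so `u = (0, a₁)` and
`w = (-g, d ⨯₃ z)` work. When `a = 0` the same identity, applied to a primitive vector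
orthogonal to `d`, shows that `d` is a cross product.
-/

/-- The standard basis vector `e i` of `ℤ⁴`. -/
noncomputable def stdE (i : Fin 4) : Fin 4 → ℤ := Pi.single i 1

open Matrix

theorem cross_cross_eq_of_dotProduct {R : Type*} [CommRing R] {a z d : Fin 3 → R}
    (hz : a ⬝ᵥ z = 1) (hd : a ⬝ᵥ d = 0) :
    a ⨯₃ (d ⨯₃ z) = d := by
  rw [cross_cross_eq_smul_sub_smul', hz, dotProduct_comm, hd, one_smul, zero_smul, sub_zero]

theorem exists_eq_smul_dotProduct_eq_one {R ι : Type*} [CommRing R] [IsDomain R]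
    [IsPrincipalIdealRing R] [Fintype ι] [Nonempty ι] (v : ι → R) :
    ∃ (g : R) (v₁ z : ι → R), v = g • v₁ ∧ v₁ ⬝ᵥ z = 1 := by
  classical
  set g := Submodule.IsPrincipal.generator (Ideal.span (Set.range v))
  have hspan : Ideal.span {g} = Ideal.span (Set.range v) :=
    Submodule.IsPrincipal.span_singleton_generator _
  have hdvd : ∀ i, g ∣ v i := fun i => Ideal.mem_span_singleton.mp <|
    hspan ▸ Ideal.subset_span (Set.mem_range_self i)
  choose v₁ hv₁ using hdvd
  obtain ⟨c, hc⟩ := (Ideal.mem_span_range_iff_exists_fun).mp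
    (hspan ▸ Ideal.mem_span_singleton_self g)
  by_cases hg : g = 0
  · obtain ⟨i⟩ := ‹Nonempty ι›
    refine ⟨0, Pi.single i 1, Pi.single i 1, funext fun j => by simp [hv₁, hg], by simp⟩
  · refine ⟨g, v₁, c, funext fun i => hv₁ i, mul_left_cancel₀ hg ?_⟩
    calc g * (v₁ ⬝ᵥ c) = ∑ i, c i * v i := by
          simp only [dotProduct, Finset.mul_sum, hv₁]
          exact Finset.sum_congr rfl fun i _ => by ring
      _ = g * 1 := by rw [hc, mul_one]

variable {R : Type*} [CommRing R] [IsDomain R] [IsPrincipalIdealRing R]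

theorem exists_cross_eq (d : Fin 3 → R) : ∃ x y : Fin 3 → R, x ⨯₃ y = d := by
  obtain ⟨g, e, s, hge, hes⟩ := exists_eq_smul_dotProduct_eq_one ![d 0, d 1]
  have h0 : d 0 = g * e 0 := by simpa using congrFun hge 0
  have h1 : d 1 = g * e 1 := by simpa using congrFun hge 1
  refine ⟨![-e 1, e 0, 0], d ⨯₃ ![-s 1, s 0, 0], cross_cross_eq_of_dotProduct ?_ ?_⟩
  · rw [vec3_dotProduct', ← hes, vec2_dotProduct]; ring
  · rw [vec3_dotProduct, h0, h1]; simp only [cons_val_zero, cons_val_one, cons_val, zero_mul, add_zero]; ring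

theorem exists_smul_sub_smul_and_cross_eq {a d : Fin 3 → R} (h : a ⬝ᵥ d = 0) :
    ∃ (u₀ w₀ : R) (x y : Fin 3 → R), u₀ • y - w₀ • x = a ∧ x ⨯₃ y = d := by
  by_cases ha : a = 0
  · obtain ⟨x, y, hxy⟩ := exists_cross_eq d
    exact ⟨0, 0, x, y, by simp [ha], hxy⟩
  obtain ⟨g, a₁, z, rfl, hz⟩ := exists_eq_smul_dotProduct_eq_one a
  have hg : g ≠ 0 := by rintro rfl; exact ha (zero_smul _ _)
  have hd : a₁ ⬝ᵥ d = 0 := by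
    rw [smul_dotProduct, smul_eq_mul] at h
    exact (mul_eq_zero.mp h).resolve_left hg
  exact ⟨0, -g, a₁, d ⨯₃ z, by simp, cross_cross_eq_of_dotProduct hz hd⟩

theorem exists_eq_mul_sub_mul_of_plucker {p : Fin 4 → Fin 4 → R} (hdiag : ∀ i, p i i = 0)
    (hp : ∀ i j, p j i = -p i j)
    (hpl : p 0 1 * p 2 3 - p 0 2 * p 1 3 + p 0 3 * p 1 2 = 0) :
    ∃ u w : Fin 4 → R, ∀ i j, p i j = u i * w j - u j * w i := by
  obtain ⟨u₀, w₀, x, y, ha, hd⟩ := exists_smul_sub_smul_and_cross_eq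
    (a := ![p 0 1, p 0 2, p 0 3]) (d := ![p 2 3, -p 1 3, p 1 2])
    (by rw [vec3_dotProduct']; linear_combination hpl)
  obtain ⟨h01, h02, h03⟩ : u₀ * y 0 - w₀ * x 0 = p 0 1 ∧ u₀ * y 1 - w₀ * x 1 = p 0 2 ∧
      u₀ * y 2 - w₀ * x 2 = p 0 3 := by
    simpa [Fin.forall_fin_succ] using congrFun ha
  obtain ⟨h23, h13, h12⟩ : x 1 * y 2 - x 2 * y 1 = p 2 3 ∧ x 2 * y 0 - x 0 * y 2 = -p 1 3 ∧
      x 0 * y 1 - x 1 * y 0 = p 1 2 := by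
    simpa [Fin.forall_fin_succ, cross_apply] using congrFun hd
  refine ⟨![u₀, x 0, x 1, x 2], ![w₀, y 0, y 1, y 2], fun i j => ?_⟩
  fin_cases i <;> fin_cases j <;> simp <;> grind

theorem LinearMap.BilinForm.apply_eq_constr_mul_sub {R ι M : Type*} [CommRing R]
    [AddCommGroup M] [Module R M] (b : Module.Basis ι R M) {B : LinearMap.BilinForm R M} {u w : ι → R}
    (h : ∀ i j, B (b i) (b j) = u i * w j - u j * w i) (x y : M) :
    B x y = b.constr R u x * b.constr R w y - b.constr R u y * b.constr R w x := by
  have hB : B = (b.constr R u).smulRight (b.constr R w) -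
      (b.constr R w).smulRight (b.constr R u) :=
    b.ext fun i => b.ext fun j => by simp [h, mul_comm]
  rw [hB]
  simp [mul_comm]

theorem stmt_5_general (δ : LinearMap.BilinForm ℤ (Fin 4 → ℤ)) (halt : ∀ x, δ x x = 0)
    (hpf : δ (stdE 0) (stdE 1) * δ (stdE 2) (stdE 3)
         - δ (stdE 0) (stdE 2) * δ (stdE 1) (stdE 3)
         + δ (stdE 0) (stdE 3) * δ (stdE 1) (stdE 2) = 0) :
    ∃ α β : (Fin 4 → ℤ) →ₗ[ℤ] ℤ, ∀ x y, δ x y = α x * β y - α y * β x := by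
  obtain ⟨u, w, huw⟩ := exists_eq_mul_sub_mul_of_plucker (p := fun i j => δ (stdE i) (stdE j))
    (fun i => halt _) (fun i j => (LinearMap.IsAlt.neg halt _ _).symm) hpf
  exact ⟨_, _, LinearMap.BilinForm.apply_eq_constr_mul_sub (Pi.basisFun ℤ (Fin 4))
    (by simpa [stdE] using huw)⟩

/-- a primitive integral alternating bilinear form `δ` on `L ≅ ℤ⁴` with
`δ ∧ δ = 0` (vanishing Pfaffian) is decomposable: `δ = α ∧ β` for some
`α, β ∈ L* = Hom(L, ℤ)`. -/
theorem stmt_5 (δ : LinearMap.BilinForm ℤ (Fin 4 → ℤ)) (halt : ∀ x, δ x x = 0)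
    (hprim : ¬ ∃ (m : ℤ) (δ' : LinearMap.BilinForm ℤ (Fin 4 → ℤ)), 2 ≤ m ∧ δ = m • δ')
    (hpf : δ (stdE 0) (stdE 1) * δ (stdE 2) (stdE 3)
         - δ (stdE 0) (stdE 2) * δ (stdE 1) (stdE 3)
         + δ (stdE 0) (stdE 3) * δ (stdE 1) (stdE 2) = 0) :
    ∃ α β : (Fin 4 → ℤ) →ₗ[ℤ] ℤ, ∀ x y, δ x y = α x * β y - α y * β x :=
  stmt_5_general δ halt hpf
end

section
/- Let δ be an integral alternating bilinear form on L ≅ ℤ⁴ that is primitive and satisfies δ ∧ δ = 0. Then the kernel of δ, i.e. { v ∈ L : δ(v, w) = 0 for all w ∈ L }, is a direct summand of L of rank 2. -/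
/-!
Let `A` be the Gram matrix of `δ`, so that `ker δ` is the left kernel of `A`. A nonzero
alternating matrix has two linearly independent rows (a `2 × 2` principal minor is a nonzero
square), so `ker δ` has rank at most `2`. The Hodge dual `⋆A`, obtained by moving each entry
`A k l` to the complementary index pair, is again alternating and nonzero and satisfies
`⋆A * A = -Pf(A) • 1`; when the Pfaffian vanishes its rows lie in `ker δ`, so the rank is at
least `2`. Finally `L ⧸ ker δ` embeds into the free module `L*`, so over the PID `ℤ` it is free,
hence projective, and `ker δ` splits off.
-/

open Module LinearMap Matrix

theorem Submodule.exists_isCompl_of_projective_quotient {R M : Type*} [Ring R] [AddCommGroup M]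
    [Module R M] (p : Submodule R M) [Module.Projective R (M ⧸ p)] :
    ∃ q : Submodule R M, IsCompl p q := by
  obtain ⟨s, hs⟩ := p.mkQ.exists_rightInverse_of_surjective p.range_mkQ
  have hmkQ (y : M ⧸ p) : p.mkQ (s y) = y := LinearMap.congr_fun hs y
  refine ⟨range s, ?_, ?_⟩
  · rw [Submodule.disjoint_def]
    rintro _ hx ⟨y, rfl⟩
    rw [← Submodule.Quotient.mk_eq_zero, ← Submodule.mkQ_apply, hmkQ] at hx
    simp [hx]
  · rw [codisjoint_iff, eq_top_iff]
    intro x _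
    have hx : x - s (p.mkQ x) ∈ p := by
      rw [← Submodule.Quotient.mk_eq_zero, ← Submodule.mkQ_apply, map_sub, hmkQ, sub_self]
    simpa using Submodule.add_mem_sup hx (mem_range_self s (p.mkQ x))

theorem LinearMap.exists_isCompl_ker {R M N : Type*} [CommRing R] [IsDomain R]
    [IsPrincipalIdealRing R] [AddCommGroup M] [Module R M] [AddCommGroup N] [Module R N]
    [Module.Free R N] [Module.Finite R N] (f : M →ₗ[R] N) :
    ∃ q : Submodule R M, IsCompl (ker f) q :=
  have : Module.Projective R (M ⧸ ker f) := .of_equiv' f.quotKerEquivRange.symm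
  (ker f).exists_isCompl_of_projective_quotient

section Rank

variable {R : Type*} [CommRing R]

theorem linearIndependent_pair_of_det_ne_zero [NoZeroDivisors R] {N : Type*} [AddCommGroup N]
    [Module R N] {x y : N} (φ ψ : N →ₗ[R] R) (h : φ x * ψ y - φ y * ψ x ≠ 0) :
    LinearIndependent R ![x, y] := by
  rw [LinearIndependent.pair_iff]
  intro s t hst
  have hφ : s * φ x + t * φ y = 0 := by simpa using congrArg φ hst
  have hψ : s * ψ x + t * ψ y = 0 := by simpa using congrArg ψ hst
  constructor
  · refine (mul_eq_zero.1 ?_).resolve_right h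
    linear_combination ψ y * hφ - φ y * hψ
  · refine (mul_eq_zero.1 ?_).resolve_right h
    linear_combination φ x * hψ - ψ x * hφ

theorem Matrix.two_le_finrank_range_vecMulLinear [IsDomain R] [IsNoetherianRing R]
    {n : Type*} [Fintype n] [DecidableEq n] (A : Matrix n n R) {p q : n}
    (h : A p p * A q q - A q p * A p q ≠ 0) :
    2 ≤ finrank R (range A.vecMulLinear) := by
  have hli : LinearIndependent R ![A.row p, A.row q] :=
    linearIndependent_pair_of_det_ne_zero (proj p) (proj q) h
  have hle : Submodule.span R (Set.range ![A.row p, A.row q]) ≤ range A.vecMulLinear := by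
    rw [range_vecMulLinear]
    exact Submodule.span_mono (by rintro _ ⟨i, rfl⟩; fin_cases i <;> simp)
  calc 2 = finrank R (Submodule.span R (Set.range ![A.row p, A.row q])) := by
        rw [finrank_span_eq_card hli]; simp
    _ ≤ _ := Submodule.finrank_mono hle

def Matrix.IsAlt {n : Type*} (A : Matrix n n R) : Prop :=
  (∀ i, A i i = 0) ∧ ∀ i j, A j i = -A i j

theorem Matrix.IsAlt.two_le_finrank_range_vecMulLinear [IsDomain R] [IsNoetherianRing R]
    {n : Type*} [Fintype n] [DecidableEq n] {A : Matrix n n R} (hA : A.IsAlt) (h0 : A ≠ 0) :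
    2 ≤ finrank R (range A.vecMulLinear) := by
  obtain ⟨p, q, hpq⟩ : ∃ p q, A p q ≠ 0 := by
    by_contra! h
    exact h0 (Matrix.ext h)
  refine A.two_le_finrank_range_vecMulLinear (p := p) (q := q) ?_
  rw [hA.1, hA.1, hA.2 p q]
  simpa using hpq

def hodgeStar (A : Matrix (Fin 4) (Fin 4) R) : Matrix (Fin 4) (Fin 4) R :=
  !![0, A 2 3, -A 1 3, A 1 2;
    -A 2 3, 0, A 0 3, -A 0 2;
    A 1 3, -A 0 3, 0, A 0 1;
    -A 1 2, A 0 2, -A 0 1, 0]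

def pfaffian (A : Matrix (Fin 4) (Fin 4) R) : R :=
  A 0 1 * A 2 3 - A 0 2 * A 1 3 + A 0 3 * A 1 2

theorem hodgeStar_zero : hodgeStar (0 : Matrix (Fin 4) (Fin 4) R) = 0 := by
  ext i j
  fin_cases i <;> fin_cases j <;> simp [hodgeStar]

theorem hodgeStar_isAlt (A : Matrix (Fin 4) (Fin 4) R) : (hodgeStar A).IsAlt := by
  refine ⟨fun i => ?_, fun i j => ?_⟩
  · fin_cases i <;> simp [hodgeStar]
  · fin_cases i <;> fin_cases j <;> simp [hodgeStar]

namespace Matrix.IsAlt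

variable {A : Matrix (Fin 4) (Fin 4) R} (hA : A.IsAlt)
include hA

theorem hodgeStar_hodgeStar : hodgeStar (hodgeStar A) = A := by
  obtain ⟨hdiag, hskew⟩ := hA
  ext i j
  fin_cases i <;> fin_cases j <;>
    simp [hodgeStar, hdiag, hskew 0 1, hskew 0 2, hskew 0 3, hskew 1 2, hskew 1 3, hskew 2 3]

theorem hodgeStar_mul : hodgeStar A * A = -pfaffian A • 1 := by
  obtain ⟨hdiag, hskew⟩ := hA
  ext i j
  fin_cases i <;> fin_cases j <;>
    simp [hodgeStar, pfaffian, mul_apply, Fin.sum_univ_four, hdiag, hskew 0 1, hskew 0 2,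
      hskew 0 3, hskew 1 2, hskew 1 3, hskew 2 3] <;> ring

theorem finrank_ker_vecMulLinear [IsDomain R] [IsNoetherianRing R] (hpf : pfaffian A = 0)
    (h0 : A ≠ 0) : finrank R (ker A.vecMulLinear) = 2 := by
  have hnullity := (ker A.vecMulLinear).finrank_quotient_add_finrank
  rw [A.vecMulLinear.quotKerEquivRange.finrank_eq, finrank_fin_fun] at hnullity
  have hstar_le : range (hodgeStar A).vecMulLinear ≤ ker A.vecMulLinear := by
    rintro _ ⟨x, rfl⟩
    simp [vecMul_vecMul, hA.hodgeStar_mul, hpf]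
  have hstar0 : hodgeStar A ≠ 0 := fun h =>
    h0 (by rw [← hA.hodgeStar_hodgeStar, h, hodgeStar_zero])
  have := (hodgeStar_isAlt A).two_le_finrank_range_vecMulLinear hstar0
  have := hA.two_le_finrank_range_vecMulLinear h0
  have := Submodule.finrank_mono hstar_le
  omega

end Matrix.IsAlt

namespace LinearMap.BilinForm

variable {n : Type*} [Fintype n] [DecidableEq n]

theorem IsAlt.toMatrix' {B : LinearMap.BilinForm R (n → R)} (hB : B.IsAlt) :
    (toMatrix' B).IsAlt :=
  ⟨fun i => by simp [toMatrix'_apply, hB.self_eq_zero],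
    fun i j => by simpa only [toMatrix'_apply] using (hB.neg_eq _ _).symm⟩

theorem ker_eq_ker_vecMulLinear (B : LinearMap.BilinForm R (n → R)) :
    ker B = ker (toMatrix' B).vecMulLinear := by
  ext x
  conv_lhs => rw [← Matrix.toBilin'_toMatrix' B]
  simp only [mem_ker, vecMulLinear_apply, ← dotProduct_eq_zero_iff, ← dotProduct_mulVec,
    ← Matrix.toBilin'_apply', LinearMap.ext_iff, LinearMap.zero_apply]

end LinearMap.BilinForm

end Rank

/-- the kernel of a primitive integral alternating bilinear form `δ` on
`L ≅ ℤ⁴` with vanishing Pfaffian is a direct summand of `L` of rank 2. -/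
theorem stmt_6 (δ : LinearMap.BilinForm ℤ (Fin 4 → ℤ)) (halt : ∀ x, δ x x = 0)
    (hprim : ¬ ∃ (m : ℤ) (δ' : LinearMap.BilinForm ℤ (Fin 4 → ℤ)), 2 ≤ m ∧ δ = m • δ')
    (hpf : δ (stdE 0) (stdE 1) * δ (stdE 2) (stdE 3)
         - δ (stdE 0) (stdE 2) * δ (stdE 1) (stdE 3)
         + δ (stdE 0) (stdE 3) * δ (stdE 1) (stdE 2) = 0) :
    ∃ C : Submodule ℤ (Fin 4 → ℤ),
      IsCompl (LinearMap.ker δ) C ∧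
      Module.finrank ℤ (LinearMap.ker δ) = 2 := by
  have hA : (BilinForm.toMatrix' δ).IsAlt := BilinForm.IsAlt.toMatrix' halt
  have hA0 : BilinForm.toMatrix' δ ≠ 0 := by
    rw [ne_eq, LinearEquiv.map_eq_zero_iff]
    rintro rfl
    exact hprim ⟨2, 0, le_rfl, by simp⟩
  obtain ⟨C, hC⟩ := δ.exists_isCompl_ker
  refine ⟨C, hC, ?_⟩
  rw [BilinForm.ker_eq_ker_vecMulLinear]
  exact hA.finrank_ker_vecMulLinear hpf hA0
end

section
/- Let E be a free abelian group of rank 6 with a nondegenerate symmetric bilinear form of signature (3,3), extended ℝ-bilinearly to E_ℝ = E ⊗ ℝ. Fix κ, x₁, x₂ ∈ E_ℝ pairwise orthogonal with ⟨κ,κ⟩ > 0, ⟨x₁,x₁⟩ > 0, ⟨x₂,x₂⟩ > 0, and fix λ > 0, ε > 0, c > 0. Then the set of δ ∈ E with ⟨δ,δ⟩ = 0, 0 < ⟨κ,δ⟩ ≤ λ, |⟨δ,x₁⟩| ≤ ε·‖δ‖, and |⟨δ,x₂⟩| ≤ ε·‖δ‖ is bounded in norm for ε sufficiently small; in particular,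 for ε small enough this set is finite. -/
/-!
Let `P` be the span of `κ, x₁, x₂`. The form is positive definite on `P`, and as `3` is the
largest dimension of a positive definite subspace it is negative semidefinite on the orthogonal
complement `P^⊥`. An isotropic vector of `P^⊥` is then orthogonal to all of `P^⊥` (a nonpositive
quadratic `t ↦ B (w + t v) (w + t v)` vanishing at `0` has no linear term) and to `P`, hence to
`V = P ⊕ P^⊥`, so it is `0` by nondegeneracy. Compactness of the unit sphere then gives `η > 0`
with `η ‖δ‖ ≤ max (|⟨κ, δ⟩|, |⟨x₁, δ⟩|, |⟨x₂, δ⟩|)` for every isotropic `δ`; for `ε ≤ η / 2`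
this forces `‖δ‖ ≤ 2λ / η`, and a discrete subgroup meets a ball in finitely many points.
-/

open Module
open LinearMap (BilinForm)

namespace LinearMap.BilinForm

variable {V : Type*} [AddCommGroup V] [Module ℝ V] {B : BilinForm ℝ V}

theorem apply_self_sum_of_iIsOrtho {ι : Type*} [Fintype ι] {v : ι → V} (hB : B.iIsOrtho v)
    (g : ι → ℝ) :
    B (∑ i, g i • v i) (∑ i, g i • v i) = ∑ i, g i ^ 2 * B (v i) (v i) := by
  simp only [sum_left, sum_right, smul_left, smul_right]
  refine Finset.sum_congr rfl fun i _ => ?_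
  rw [Finset.sum_eq_single i (fun j _ hji => by rw [hB hji, mul_zero]) (by simp)]
  ring

theorem apply_self_pos_of_mem_span_iIsOrtho {ι : Type*} [Fintype ι] {v : ι → V}
    (hB : B.iIsOrtho v) (hv : ∀ i, 0 < B (v i) (v i)) {x : V}
    (hx : x ∈ Submodule.span ℝ (Set.range v)) (hx0 : x ≠ 0) : 0 < B x x := by
  obtain ⟨g, rfl⟩ := (Submodule.mem_span_range_iff_exists_fun ℝ).mp hx
  obtain ⟨i, hi⟩ : ∃ i, g i ≠ 0 := by
    by_contra! h
    simp [h] at hx0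
  rw [apply_self_sum_of_iIsOrtho hB]
  exact Finset.sum_pos' (fun j _ => by have := hv j; positivity)
    ⟨i, Finset.mem_univ i, mul_pos (by positivity) (hv i)⟩

theorem apply_self_nonpos_of_mem_orthogonal [FiniteDimensional ℝ V] (hB : B.IsSymm)
    {P : Submodule ℝ V} (hP : ∀ x ∈ P, x ≠ 0 → 0 < B x x)
    (hmax : ∀ W : Submodule ℝ V, (∀ x ∈ W, x ≠ 0 → 0 < B x x) → finrank ℝ W ≤ finrank ℝ P)
    {w : V} (hw : w ∈ B.orthogonal P) : B w w ≤ 0 := by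
  by_contra! hww
  have hwP : w ∉ P := fun h => hww.ne' (hw w h)
  suffices hpos : ∀ x ∈ P ⊔ ℝ ∙ w, x ≠ 0 → 0 < B x x from
    (Submodule.finrank_lt_finrank_of_lt (Submodule.lt_sup_iff_notMem.mpr hwP)).not_ge
      (hmax _ hpos)
  intro x hx hx0
  obtain ⟨p, hp, _, ht, rfl⟩ := Submodule.mem_sup.mp hx
  obtain ⟨t, rfl⟩ := Submodule.mem_span_singleton.mp ht
  have hpw : B p w = 0 := hw p hp
  have hwp : B w p = 0 := by rw [hB.eq, hpw]
  have hexpand : B (p + t • w) (p + t • w) = B p p + t ^ 2 * B w w := by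
    simp only [map_add, map_smul, LinearMap.add_apply, LinearMap.smul_apply, smul_eq_mul,
      hpw, hwp]
    ring
  rw [hexpand]
  rcases eq_or_ne p 0 with rfl | hp0
  · have ht : t ≠ 0 := by rintro rfl; simp at hx0
    simp only [map_zero, zero_add]
    positivity
  · have := hP p hp hp0
    positivity

theorem apply_eq_zero_of_apply_self_eq_zero (hB : B.IsSymm) {W : Submodule ℝ V}
    (hW : ∀ v ∈ W, B v v ≤ 0) {w : V} (hw : w ∈ W) (hww : B w w = 0) {v : V} (hv : v ∈ W) :
    B w v = 0 := by
  have hquad : ∀ t : ℝ, 0 ≤ -B v v * (t * t) + -(2 * B w v) * t + 0 := by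
    intro t
    have := hW (w + t • v) (W.add_mem hw (W.smul_mem t hv))
    simp only [map_add, map_smul, LinearMap.add_apply, LinearMap.smul_apply, smul_eq_mul,
      hww, hB.eq v w] at this
    linarith
  have := discrim_le_zero hquad
  rw [discrim] at this
  nlinarith [sq_nonneg (B w v)]

theorem eq_zero_of_mem_orthogonal_of_apply_self_eq_zero [FiniteDimensional ℝ V] (hB : B.IsSymm)
    (hnd : B.Nondegenerate) {P : Submodule ℝ V} (hP : ∀ x ∈ P, x ≠ 0 → 0 < B x x)
    (hmax : ∀ W : Submodule ℝ V, (∀ x ∈ W, x ≠ 0 → 0 < B x x) → finrank ℝ W ≤ finrank ℝ P)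
    {w : V} (hw : w ∈ B.orthogonal P) (hww : B w w = 0) : w = 0 := by
  have hdisj : Disjoint P (B.orthogonal P) := by
    rw [Submodule.disjoint_def]
    intro x hxP hx
    by_contra hx0
    exact (hP x hxP hx0).ne' (hx x hxP)
  have hcompl : IsCompl P (B.orthogonal P) := isCompl_orthogonal_of_restrict_nondegenerate
    hB.isRefl (nondegenerate_restrict_of_disjoint_orthogonal B hB.isRefl hdisj)
  refine hnd.1 w fun v => ?_
  obtain ⟨p, hp, q, hq, rfl⟩ : ∃ p ∈ P, ∃ q ∈ B.orthogonal P, p + q = v :=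
    Submodule.mem_sup.mp (hcompl.sup_eq_top ▸ Submodule.mem_top)
  rw [map_add, hB.eq, hw p hp, zero_add]
  exact apply_eq_zero_of_apply_self_eq_zero hB
    (fun _ => apply_self_nonpos_of_mem_orthogonal hB hP hmax) hw hww hq

theorem exists_pos_mul_norm_le_of_apply_self_eq_zero {V F : Type*} [NormedAddCommGroup V]
    [NormedSpace ℝ V] [FiniteDimensional ℝ V] [NormedAddCommGroup F] [NormedSpace ℝ F]
    (B : BilinForm ℝ V) (L : V →ₗ[ℝ] F) (h : ∀ v, B v v = 0 → L v = 0 → v = 0) :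
    ∃ η > 0, ∀ v, B v v = 0 → η * ‖v‖ ≤ ‖L v‖ := by
  have hcont : Continuous fun u => |B u u| + ‖L u‖ :=
    ((B.toContinuousBilinearMap.continuous₂.comp (continuous_id.prodMk continuous_id)).abs).add
      L.continuous_of_finiteDimensional.norm
  have hsphere : ∀ u ∈ Metric.sphere (0 : V) 1, 0 < |B u u| + ‖L u‖ := by
    intro u hu
    by_contra! hle
    have hu0 : u = 0 := h u (abs_eq_zero.mp (by linarith [abs_nonneg (B u u), norm_nonneg (L u)]))
      (norm_eq_zero.mp (by linarith [abs_nonneg (B u u), norm_nonneg (L u)]))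
    simp [hu0] at hu
  obtain ⟨η, hη, hηle⟩ :=
    (isCompact_sphere (0 : V) 1).exists_forall_le' hcont.continuousOn hsphere
  refine ⟨η, hη, fun v hvv => ?_⟩
  rcases eq_or_ne v 0 with rfl | hv0
  · simp
  have hnorm : 0 < ‖v‖ := norm_pos_iff.mpr hv0
  have := hηle (‖v‖⁻¹ • v) (by simp [norm_smul, hnorm.ne'])
  simp only [map_smul, LinearMap.smul_apply, smul_eq_mul, hvv, mul_zero, abs_zero, zero_add,
    norm_smul, norm_inv, norm_norm] at this
  rw [le_inv_mul_iff₀ hnorm] at this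
  linarith

theorem eq_zero_of_iIsOrtho_of_apply_self_eq_zero [FiniteDimensional ℝ V] {ι : Type*}
    [Fintype ι] (hB : B.IsSymm) (hnd : B.Nondegenerate) {v : ι → V} (hortho : B.iIsOrtho v)
    (hpos : ∀ i, 0 < B (v i) (v i))
    (hmax : ∀ W : Submodule ℝ V, (∀ x ∈ W, x ≠ 0 → 0 < B x x) → finrank ℝ W ≤ Fintype.card ι)
    {w : V} (hw : ∀ i, B (v i) w = 0) (hww : B w w = 0) : w = 0 := by
  have hrank : finrank ℝ (Submodule.span ℝ (Set.range v)) = Fintype.card ι :=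
    finrank_span_eq_card (linearIndependent_of_iIsOrtho hortho fun i => (hpos i).ne')
  refine eq_zero_of_mem_orthogonal_of_apply_self_eq_zero hB hnd
    (fun _ => apply_self_pos_of_mem_span_iIsOrtho hortho hpos) (hrank ▸ hmax) ?_ hww
  intro n hn
  refine Submodule.span_le (p := LinearMap.ker (B.flip w)) |>.mpr ?_ hn
  rintro _ ⟨i, rfl⟩
  exact hw i

end LinearMap.BilinForm

theorem Submodule.finite_of_subset_of_norm_le {V : Type*} [NormedAddCommGroup V] [ProperSpace V]
    (E : Submodule ℤ V) [DiscreteTopology E] {s : Set V} (hsE : s ⊆ E) {C : ℝ}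
    (hC : ∀ x ∈ s, ‖x‖ ≤ C) : s.Finite := by
  have : DiscreteTopology E.toAddSubgroup := ‹_›
  have hclosed : IsClosed (E : Set V) := AddSubgroup.isClosed_of_discrete (H := E.toAddSubgroup)
  refine (Metric.finite_isBounded_inter_isClosed DiscreteTopology.isDiscrete
    (Metric.isBounded_closedBall (x := 0) (r := C)) hclosed).subset fun x hx => ⟨?_, hsE hx⟩
  simpa using hC x hx

open LinearMap.BilinForm

theorem stmt_10_general (V : Type*) [NormedAddCommGroup V] [NormedSpace ℝ V]
    [FiniteDimensional ℝ V]
    (B : LinearMap.BilinForm ℝ V) (hsymm : B.IsSymm) (hnd : B.Nondegenerate)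
    (hmax : ∀ W : Submodule ℝ V, (∀ x ∈ W, x ≠ 0 → 0 < B x x) →
      Module.finrank ℝ W ≤ 3)
    (E : Submodule ℤ V) [DiscreteTopology E]
    (κ x₁ x₂ : V)
    (hκx₁ : B κ x₁ = 0) (hκx₂ : B κ x₂ = 0) (hx₁x₂ : B x₁ x₂ = 0)
    (hκ : 0 < B κ κ) (hx₁ : 0 < B x₁ x₁) (hx₂ : 0 < B x₂ x₂)
    (lam : ℝ) :
    ∃ ε₀ > 0, ∀ ε : ℝ, 0 < ε → ε ≤ ε₀ →
      (∃ C : ℝ, ∀ δ : V,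
          δ ∈ E ∧ B δ δ = 0 ∧ 0 < B κ δ ∧ B κ δ ≤ lam ∧
            |B δ x₁| ≤ ε * ‖δ‖ ∧ |B δ x₂| ≤ ε * ‖δ‖ → ‖δ‖ ≤ C) ∧
      {δ : V | δ ∈ E ∧ B δ δ = 0 ∧ 0 < B κ δ ∧ B κ δ ≤ lam ∧
          |B δ x₁| ≤ ε * ‖δ‖ ∧ |B δ x₂| ≤ ε * ‖δ‖}.Finite := by
  set v : Fin 3 → V := ![κ, x₁, x₂]
  have hortho : B.iIsOrtho v := by
    intro i j hij
    fin_cases i <;> fin_cases j <;>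
      simp_all [Function.onFun, v, hsymm.eq x₁ κ, hsymm.eq x₂ κ, hsymm.eq x₂ x₁]
  have hpos : ∀ i, 0 < B (v i) (v i) := by
    intro i; fin_cases i <;> assumption
  let L : V →ₗ[ℝ] Fin 3 → ℝ := LinearMap.pi fun i => B (v i)
  obtain ⟨η, hη, hηL⟩ := exists_pos_mul_norm_le_of_apply_self_eq_zero B L
    fun δ hδδ hLδ => eq_zero_of_iIsOrtho_of_apply_self_eq_zero hsymm hnd hortho hpos
      (by simpa using hmax) (congrFun hLδ) hδδ
  refine ⟨η / 2, by positivity, fun ε hε hεη => ?_⟩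
  have hbound : ∀ δ : V,
      δ ∈ E ∧ B δ δ = 0 ∧ 0 < B κ δ ∧ B κ δ ≤ lam ∧
        |B δ x₁| ≤ ε * ‖δ‖ ∧ |B δ x₂| ≤ ε * ‖δ‖ → ‖δ‖ ≤ 2 * lam / η := by
    rintro δ ⟨-, hδδ, hκδ, hκδlam, hδx₁, hδx₂⟩
    have hLδ : ‖L δ‖ ≤ lam + ε * ‖δ‖ := by
      have hεδ := mul_nonneg hε.le (norm_nonneg δ)
      refine (pi_norm_le_iff_of_nonneg (by linarith)).mpr fun i => ?_
      fin_cases i <;>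
        simp only [Fin.zero_eta, Fin.mk_one, Fin.reduceFinMk, Fin.isValue, LinearMap.pi_apply,
          Matrix.cons_val, Real.norm_eq_abs, hsymm.eq x₁ δ, hsymm.eq x₂ δ, L, v] <;>
        linarith [abs_of_pos hκδ]
    have hηδ := hηL δ hδδ
    have hεδ := mul_le_mul_of_nonneg_right hεη (norm_nonneg δ)
    rw [le_div_iff₀ hη]
    linarith
  exact ⟨⟨_, hbound⟩, E.finite_of_subset_of_norm_le (fun δ hδ => hδ.1) hbound⟩

/-- local finiteness. Let `E` be a rank-6 lattice (discrete full
subgroup) in a 6-dimensional real normed space `V = E ⊗ ℝ` carrying a nondegenerate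
symmetric bilinear form of signature (3,3). Fix pairwise orthogonal `κ, x₁, x₂` of
positive square, `λ > 0` and `c > 0`. Then for all sufficiently small `ε > 0`, the set
`{δ ∈ E : ⟨δ,δ⟩ = 0, 0 < ⟨κ,δ⟩ ≤ λ, |⟨δ,x₁⟩| ≤ ε‖δ‖, |⟨δ,x₂⟩| ≤ ε‖δ‖}` is bounded in
norm, and in particular finite. -/
theorem stmt_10 (V : Type*) [NormedAddCommGroup V] [NormedSpace ℝ V]
    [FiniteDimensional ℝ V] (hdim : Module.finrank ℝ V = 6)
    (B : LinearMap.BilinForm ℝ V) (hsymm : B.IsSymm) (hnd : B.Nondegenerate)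
    (hposdef3 : ∃ W : Submodule ℝ V, Module.finrank ℝ W = 3 ∧
      ∀ x ∈ W, x ≠ 0 → 0 < B x x)
    (hmax : ∀ W : Submodule ℝ V, (∀ x ∈ W, x ≠ 0 → 0 < B x x) →
      Module.finrank ℝ W ≤ 3)
    (E : Submodule ℤ V) [DiscreteTopology E]
    (hspan : Submodule.span ℝ (E : Set V) = ⊤)
    (hint : ∀ x ∈ E, ∀ y ∈ E, ∃ n : ℤ, B x y = n)
    (κ x₁ x₂ : V)
    (hκx₁ : B κ x₁ = 0) (hκx₂ : B κ x₂ = 0) (hx₁x₂ : B x₁ x₂ = 0)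
    (hκ : 0 < B κ κ) (hx₁ : 0 < B x₁ x₁) (hx₂ : 0 < B x₂ x₂)
    (lam : ℝ) (hlam : 0 < lam) (c : ℝ) (hc : 0 < c) :
    ∃ ε₀ > 0, ∀ ε : ℝ, 0 < ε → ε ≤ ε₀ →
      (∃ C : ℝ, ∀ δ : V,
          δ ∈ E ∧ B δ δ = 0 ∧ 0 < B κ δ ∧ B κ δ ≤ lam ∧
            |B δ x₁| ≤ ε * ‖δ‖ ∧ |B δ x₂| ≤ ε * ‖δ‖ → ‖δ‖ ≤ C) ∧
      {δ : V | δ ∈ E ∧ B δ δ = 0 ∧ 0 < B κ δ ∧ B κ δ ≤ lam ∧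
          |B δ x₁| ≤ ε * ‖δ‖ ∧ |B δ x₂| ≤ ε * ‖δ‖}.Finite :=
  stmt_10_general V B hsymm hnd hmax E κ x₁ x₂ hκx₁ hκx₂ hx₁x₂ hκ hx₁ hx₂ lam
end
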